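/- Let G be a spider graph with p ≥ 1 paths attached to the center, with N_e vertices at even positive level and N_o vertices at odd level. If N_e = N_o, then the differential chromatic number of G is at most N_o; if N_e < N_o, then the differential chromatic number of G is at most N_e + 1. In both cases DC(G) ≤ min(N_e + 1, N_o). -/

import Mathlib

/-!
If a labelling `c` of a graph on `n` vertices has differential value at least `d`, then the
vertices carrying `d` consecutive labels are pairwise non-adjacent.  Choosing such a window
around the label of the centre gives an independent set of size `d` through the centre; its
other vertices avoid level 1 and no two of them are consecutive on a leg, so there are at most
`N_e` of them.  On the other hand one of the windows `[1, d]` and `[n + 1 - d, n]` misses the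
label of the centre, since otherwise no label in `[1, n]` would be admissible for its
neighbours; this gives `d` independent leg vertices, so `d ≤ N_o`.
-/

/-- A labeling of the vertices of a finite graph on `n` vertices: a one-to-one
assignment of the numbers `1, …, n` to the vertices. -/
def IsLabeling {V : Type*} [Fintype V] (c : V → ℕ) : Prop :=
  Function.Injective c ∧ ∀ v, c v ∈ Finset.Icc 1 (Fintype.card V)

/-- The differential value of the labeling `c` is at least `d`: every edge has
label difference at least `d`. -/
def DiffValAtLeast {V : Type*} (G : SimpleGraph V) (c : V → ℕ) (d : ℕ) : Prop :=
  ∀ u v, G.Adj u v → d ≤ Nat.dist (c u) (c v)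

/-- The differential chromatic number: the maximum, over all labelings, of the
minimum label difference over the edges. -/
noncomputable def diffChromNum {V : Type*} [Fintype V] (G : SimpleGraph V) : ℕ :=
  sSup {d : ℕ | ∃ c : V → ℕ, IsLabeling c ∧ DiffValAtLeast G c d}

/-- The spider graph with center `none` and `p` attached paths, the `i`-th path
having `ℓ i` vertices `some ⟨i, j⟩` (the vertex `some ⟨i, j⟩` is at level `j + 1`,
i.e. at distance `j + 1` from the center). -/
def spider (p : ℕ) (ℓ : Fin p → ℕ) : SimpleGraph (Option (Σ i : Fin p, Fin (ℓ i))) :=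
  SimpleGraph.fromRel (fun a b =>
    (a = none ∧ ∃ (i : Fin p) (h : 0 < ℓ i), b = some ⟨i, ⟨0, h⟩⟩) ∨
    (∃ (i : Fin p) (x y : Fin (ℓ i)), (x : ℕ) + 1 = (y : ℕ) ∧
      a = some ⟨i, x⟩ ∧ b = some ⟨i, y⟩))

/-- The number of vertices of the spider at even positive level (the vertex
`some ⟨i, j⟩` is at level `j + 1`). -/
def spiderNe (p : ℕ) (ℓ : Fin p → ℕ) : ℕ :=
  (Finset.univ.filter (fun v : Σ i : Fin p, Fin (ℓ i) => (v.2 : ℕ) % 2 = 1)).card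

/-- The number of vertices of the spider at odd level. -/
def spiderNo (p : ℕ) (ℓ : Fin p → ℕ) : ℕ :=
  (Finset.univ.filter (fun v : Σ i : Fin p, Fin (ℓ i) => (v.2 : ℕ) % 2 = 0)).card


open Finset

section Labeling

variable {V : Type*} [Fintype V] {G : SimpleGraph V} {c : V → ℕ} {d : ℕ}

lemma IsLabeling.image_univ (hc : IsLabeling c) [DecidableEq V] :
    univ.image c = Icc 1 (Fintype.card V) := by
  refine eq_of_subset_of_card_le (fun m hm => ?_) ?_
  · obtain ⟨v, -, rfl⟩ := mem_image.mp hm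
    exact hc.2 v
  · rw [card_image_of_injective _ hc.1, card_univ, Nat.card_Icc, Nat.add_sub_cancel]

lemma IsLabeling.card_filter_mem_Icc (hc : IsLabeling c) {a b : ℕ} (ha : 1 ≤ a)
    (hb : b ≤ Fintype.card V) : #{v | c v ∈ Icc a b} = b + 1 - a := by
  classical
  have himage : ({v | c v ∈ Icc a b} : Finset V).image c = Icc a b := by
    rw [← filter_image (p := (· ∈ Icc a b)), hc.image_univ, filter_mem_eq_inter,
      inter_eq_right.mpr (Icc_subset_Icc ha hb)]
  rw [← card_image_of_injective _ hc.1, himage, Nat.card_Icc]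

lemma DiffValAtLeast.lt_card (hc : IsLabeling c) (hd : DiffValAtLeast G c d) {u v : V}
    (huv : G.Adj u v) : d < Fintype.card V := by
  have := hd u v huv
  have hu := mem_Icc.mp (hc.2 u)
  have hv := mem_Icc.mp (hc.2 v)
  unfold Nat.dist at this
  omega

lemma DiffValAtLeast.isIndepSet_filter_mem_Icc (hd : DiffValAtLeast G c d) {a b : ℕ}
    (hab : b < a + d) : G.IsIndepSet (({v | c v ∈ Icc a b} : Finset V) : Set V) := by
  intro u hu v hv _ huv
  have := hd u v huv
  simp only [coe_filter, mem_univ, true_and, Set.mem_ofPred_eq, mem_Icc] at hu hv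
  unfold Nat.dist at this
  omega

lemma exists_isIndepSet_card_eq_of_mem (hc : IsLabeling c) (hd : DiffValAtLeast G c d)
    (hd0 : 0 < d) (hdn : d ≤ Fintype.card V) (u : V) :
    ∃ s : Finset V, G.IsIndepSet s ∧ #s = d ∧ u ∈ s := by
  have hu := mem_Icc.mp (hc.2 u)
  set a := min (c u) (Fintype.card V + 1 - d)
  refine ⟨({v | c v ∈ Icc a (a + d - 1)} : Finset V),
    hd.isIndepSet_filter_mem_Icc (by omega), ?_, ?_⟩
  · rw [hc.card_filter_mem_Icc (by omega) (by omega)]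
    omega
  · simp only [mem_filter, mem_univ, true_and, mem_Icc]
    omega

lemma exists_isIndepSet_card_eq_of_not_mem (hc : IsLabeling c) (hd : DiffValAtLeast G c d)
    {u w : V} (huw : G.Adj u w) :
    ∃ s : Finset V, G.IsIndepSet s ∧ #s = d ∧ u ∉ s := by
  have hdn := hd.lt_card hc huw
  have hu := mem_Icc.mp (hc.2 u)
  by_cases hlow : c u ≤ d
  · refine ⟨({v | c v ∈ Icc (Fintype.card V + 1 - d) (Fintype.card V)} : Finset V),
      hd.isIndepSet_filter_mem_Icc (by omega), ?_, ?_⟩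
    · rw [hc.card_filter_mem_Icc (by omega) le_rfl]
      omega
    · have := hd u w huw
      have hw := mem_Icc.mp (hc.2 w)
      simp only [mem_filter, mem_univ, true_and, mem_Icc]
      unfold Nat.dist at this
      omega
  · refine ⟨({v | c v ∈ Icc 1 d} : Finset V), hd.isIndepSet_filter_mem_Icc (by omega), ?_, ?_⟩
    · rw [hc.card_filter_mem_Icc le_rfl hdn.le]
      omega
    · simp only [mem_filter, mem_univ, true_and, mem_Icc]
      omega

end Labeling

section Spider

variable {p : ℕ} {ℓ : Fin p → ℕ}

lemma spider_adj_none_some (i : Fin p) (h : 0 < ℓ i) :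
    (spider p ℓ).Adj none (some ⟨i, ⟨0, h⟩⟩) := by
  rw [spider, SimpleGraph.fromRel_adj]
  exact ⟨by simp, Or.inl (Or.inl ⟨rfl, i, h, rfl⟩)⟩

lemma spider_adj_some_some {i : Fin p} {x y : Fin (ℓ i)} (h : (x : ℕ) + 1 = y) :
    (spider p ℓ).Adj (some ⟨i, x⟩) (some ⟨i, y⟩) := by
  rw [spider, SimpleGraph.fromRel_adj]
  refine ⟨?_, Or.inl (Or.inr ⟨i, x, y, h, rfl, rfl⟩)⟩
  simp only [ne_eq, Option.some.injEq, Sigma.mk.inj_iff, heq_eq_eq, true_and]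
  rintro rfl
  omega

/-- Moving each vertex down its leg by at most one step is injective on a set of leg vertices
with no two consecutive ones on a leg. -/
lemma card_le_card_filter_of_round_down {S : Finset (Σ i : Fin p, Fin (ℓ i))}
    (hS : ∀ i (x y : Fin (ℓ i)), ⟨i, x⟩ ∈ S → ⟨i, y⟩ ∈ S → (x : ℕ) + 1 ≠ y)
    (P : ℕ → Prop) [DecidablePred P] {r : ℕ → ℕ} (hr_le : ∀ j, r j ≤ j)
    (hr : ∀ v ∈ S, (v.2 : ℕ) ≤ r v.2 + 1 ∧ P (r v.2)) :
    #S ≤ #{v : Σ i : Fin p, Fin (ℓ i) | P v.2} := by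
  refine card_le_card_of_injOn (fun v => ⟨v.1, ⟨r v.2, (hr_le _).trans_lt v.2.isLt⟩⟩)
    (fun v hv => mem_filter.mpr ⟨mem_univ _, (hr v hv).2⟩) ?_
  rintro ⟨i, x⟩ hx ⟨i', y⟩ hy h
  obtain ⟨rfl, h⟩ := Sigma.mk.inj_iff.mp h
  have hrxy : r x = r y := by simpa using h
  have hxy := hS i x y hx hy
  have hyx := hS i y x hy hx
  have hx_le : (x : ℕ) ≤ r x + 1 := (hr _ hx).1
  have hy_le : (y : ℕ) ≤ r y + 1 := (hr _ hy).1
  have hrx := hr_le x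
  have hry := hr_le y
  congr
  omega

lemma val_add_one_ne_of_isIndepSet_spider {s : Finset (Option (Σ i : Fin p, Fin (ℓ i)))}
    (hs : (spider p ℓ).IsIndepSet s) (i : Fin p) (x y : Fin (ℓ i))
    (hx : ⟨i, x⟩ ∈ s.eraseNone) (hy : ⟨i, y⟩ ∈ s.eraseNone) : (x : ℕ) + 1 ≠ y := fun h =>
  hs (mem_eraseNone.mp hx) (mem_eraseNone.mp hy) (spider_adj_some_some h).ne
    (spider_adj_some_some h)

lemma card_le_spiderNo_of_isIndepSet {s : Finset (Option (Σ i : Fin p, Fin (ℓ i)))}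
    (hs : (spider p ℓ).IsIndepSet s) (hnone : none ∉ s) : #s ≤ spiderNo p ℓ := by
  rw [← card_eraseNone_of_not_mem hnone]
  exact card_le_card_filter_of_round_down (val_add_one_ne_of_isIndepSet_spider hs) (· % 2 = 0)
    (r := fun j => j - j % 2) (fun _ => Nat.sub_le _ _) (fun v _ => by omega)

lemma card_le_spiderNe_add_one_of_isIndepSet {s : Finset (Option (Σ i : Fin p, Fin (ℓ i)))}
    (hs : (spider p ℓ).IsIndepSet s) (hnone : none ∈ s) : #s ≤ spiderNe p ℓ + 1 := by
  have hpos : ∀ v ∈ s.eraseNone, (v.2 : ℕ) ≠ 0 := by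
    rintro ⟨i, j, hj⟩ hv rfl
    exact hs hnone (mem_eraseNone.mp hv) (by simp) (spider_adj_none_some i hj)
  have : #s.eraseNone ≤ spiderNe p ℓ :=
    card_le_card_filter_of_round_down (val_add_one_ne_of_isIndepSet_spider hs) (· % 2 = 1)
      (r := fun j => j - (j + 1) % 2) (fun _ => Nat.sub_le _ _)
      (fun v hv => by have := hpos v hv; omega)
  rw [card_eraseNone_of_mem hnone] at this
  omega

end Spider

/-- For a spider graph with `p ≥ 1` paths, `N_e` vertices at even positive level
and `N_o` vertices at odd level: if `N_e = N_o` then `DC(G) ≤ N_o`; if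
`N_e < N_o` then `DC(G) ≤ N_e + 1`; in both cases `DC(G) ≤ min(N_e + 1, N_o)`. -/
theorem stmt_16 (p : ℕ) (hp : 1 ≤ p) (ℓ : Fin p → ℕ) (hℓ : ∀ i, 1 ≤ ℓ i) :
    (spiderNe p ℓ = spiderNo p ℓ → diffChromNum (spider p ℓ) ≤ spiderNo p ℓ) ∧
    (spiderNe p ℓ < spiderNo p ℓ →
      diffChromNum (spider p ℓ) ≤ spiderNe p ℓ + 1) ∧
    diffChromNum (spider p ℓ) ≤ min (spiderNe p ℓ + 1) (spiderNo p ℓ) := by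
  have hadj : (spider p ℓ).Adj none (some ⟨⟨0, hp⟩, ⟨0, hℓ _⟩⟩) := spider_adj_none_some _ _
  have hmin : diffChromNum (spider p ℓ) ≤ min (spiderNe p ℓ + 1) (spiderNo p ℓ) := by
    refine csSup_le' fun d ⟨c, hc, hd⟩ => le_min ?_ ?_
    · rcases Nat.eq_zero_or_pos d with rfl | hd0
      · exact Nat.zero_le _
      obtain ⟨s, hs, rfl, hnone⟩ :=
        exists_isIndepSet_card_eq_of_mem hc hd hd0 (hd.lt_card hc hadj).le none
      exact card_le_spiderNe_add_one_of_isIndepSet hs hnone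
    · obtain ⟨s, hs, rfl, hnone⟩ := exists_isIndepSet_card_eq_of_not_mem hc hd hadj
      exact card_le_spiderNo_of_isIndepSet hs hnone
  exact ⟨fun _ => hmin.trans (min_le_right _ _), fun _ => hmin.trans (min_le_left _ _), hmin⟩
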